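/- Let ξ = (ξ₁,ξ₂) ∈ ℝ² and w = (w₁,w₂) ∈ ℂ² satisfy ξ₁w₁ + ξ₂w₂ = 0. Then ξ₂²|w₁|² + ξ₁²|w₂|² ≥ (1/2)(ξ₁² + ξ₂²)(|w₁|² + |w₂|²). -/

import Mathlib

/-!
Writing `A = ξ₁²`, `B = ξ₂²`, `p = |w₁|²`, `q = |w₂|²`, the constraint gives `A p = B q`, and the
claim is `(B - A)(p - q) ≥ 0`. Multiplying by `A + B` and using `A p = B q` twice turns the left
side into `(B - A)² (p + q) ≥ 0`.
-/

theorem norm_mul_norm_eq_of_mul_add_mul_eq_zero {𝕜 : Type*} [NormedDivisionRing 𝕜]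
    {a b x y : 𝕜} (h : a * x + b * y = 0) : ‖a‖ * ‖x‖ = ‖b‖ * ‖y‖ := by
  rw [← norm_mul, ← norm_mul, eq_neg_of_add_eq_zero_left h, norm_neg]

theorem add_mul_add_le_two_mul_of_mul_eq_mul {A B p q : ℝ} (hA : 0 ≤ A) (hB : 0 ≤ B)
    (hp : 0 ≤ p) (hq : 0 ≤ q) (h : A * p = B * q) :
    (A + B) * (p + q) ≤ 2 * (B * p + A * q) := by
  rcases (add_nonneg hA hB).eq_or_lt with hAB | hAB
  · obtain ⟨rfl, rfl⟩ : A = 0 ∧ B = 0 := ⟨by linarith, by linarith⟩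
    simp
  · have key : (A + B) * (2 * (B * p + A * q) - (A + B) * (p + q)) = (B - A) ^ 2 * (p + q) := by
      linear_combination 2 * (B - A) * h
    have : 0 ≤ (A + B) * (2 * (B * p + A * q) - (A + B) * (p + q)) := by
      rw [key]; positivity
    linarith [(mul_nonneg_iff_of_pos_left hAB).mp this]

/-- Pointwise Fourier-side inequality for divergence-free fields: if
`ξ₁w₁ + ξ₂w₂ = 0` then `ξ₂²|w₁|² + ξ₁²|w₂|² ≥ (1/2)(ξ₁² + ξ₂²)(|w₁|² + |w₂|²)`. -/
theorem divfree_fourier_anisotropic_lower_bound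
    (ξ₁ ξ₂ : ℝ) (w₁ w₂ : ℂ)
    (h : (ξ₁ : ℂ) * w₁ + (ξ₂ : ℂ) * w₂ = 0) :
    (1 / 2) * (ξ₁ ^ 2 + ξ₂ ^ 2) * (‖w₁‖ ^ 2 + ‖w₂‖ ^ 2)
      ≤ ξ₂ ^ 2 * ‖w₁‖ ^ 2 + ξ₁ ^ 2 * ‖w₂‖ ^ 2 := by
  have hnorm := congrArg (· ^ 2) (norm_mul_norm_eq_of_mul_add_mul_eq_zero h)
  simp only [Complex.norm_real, Real.norm_eq_abs, mul_pow, sq_abs] at hnorm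
  have := add_mul_add_le_two_mul_of_mul_eq_mul (sq_nonneg ξ₁) (sq_nonneg ξ₂)
    (sq_nonneg ‖w₁‖) (sq_nonneg ‖w₂‖) hnorm
  linarith
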